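/- Let ρ be a pure n-partite state on ℂ^{d₁} ⊗ ⋯ ⊗ ℂ^{dₙ} with n > 2 (and n ≥ 4 so that n−2 ≥ 2, or interpreting the 1/(n−2) term appropriately for n = 3). Let d = max{d₁,…,dₙ} and D = d₁⋯dₙ, and assume D/d² ≥ 1. Then the full correlation tensor satisfies ‖T^{(12⋯n)}‖² ≤ (D − (D/(n−1))∑_{s=1}^n 1/dₛ² + 1/(n−1)) + (1/(n−2))(n/(n−1) − (D/(n−1))∑_{s=1}^n 1/dₛ²). -/

import Mathlib

open Matrix

/-- The Weyl operator `A_{ij} = ∑_{m ∈ ℤ_d} ω^{im} E_{m, m+j}` on `ℂ^d`. -/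
noncomputable def Weyl (d : ℕ) [NeZero d] (ω : ℂ) (i j : ZMod d) :
    Matrix (ZMod d) (ZMod d) ℂ :=
  ∑ m : ZMod d, (ω ^ (i * m).val) • Matrix.single m (m + j) (1 : ℂ)

/-- Tensor product of Weyl operators on `ℂ^{d₁} ⊗ ⋯ ⊗ ℂ^{dₙ}`, one factor per
party (the index `(0,0)` gives the identity on that factor). -/
noncomputable def WeylT (n : ℕ) (d : Fin n → ℕ) [∀ i, NeZero (d i)] (ω : Fin n → ℂ)
    (a : ∀ i, ZMod (d i) × ZMod (d i)) :
    Matrix (∀ i, ZMod (d i)) (∀ i, ZMod (d i)) ℂ :=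
  Matrix.of fun x y => ∏ i, (Weyl (d i) (ω i) (a i).1 (a i).2) (x i) (y i)

/-- Correlation coefficient of an `n`-partite state at a Weyl multi-index. -/
noncomputable def corrN (n : ℕ) (d : Fin n → ℕ) [∀ i, NeZero (d i)] (ω : Fin n → ℂ)
    (ρ : Matrix (∀ i, ZMod (d i)) (∀ i, ZMod (d i)) ℂ)
    (a : ∀ i, ZMod (d i) × ZMod (d i)) : ℂ :=
  Matrix.trace (ρ * (WeylT n d ω a)ᴴ)

open Finset
open scoped ComplexConjugate
set_option linter.unusedSectionVars false
set_option linter.unusedVariables false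
set_option maxHeartbeats 1000000

section chars

variable {dd : ℕ} [NeZero dd] {ζ : ℂ}

lemma pow_val_mod (hζ : IsPrimitiveRoot ζ dd) (a : ℕ) : ζ ^ (a % dd) = ζ ^ a := by
  conv_rhs => rw [← Nat.div_add_mod a dd]
  rw [pow_add, pow_mul, hζ.pow_eq_one, one_pow, one_mul]

lemma e_add (hζ : IsPrimitiveRoot ζ dd) (z w : ZMod dd) :
    ζ ^ (z + w).val = ζ ^ z.val * ζ ^ w.val := by
  rw [ZMod.val_add, pow_val_mod hζ, pow_add]

lemma e_norm (hζ : IsPrimitiveRoot ζ dd) (z : ZMod dd) : ‖ζ ^ z.val‖ = 1 := by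
  rw [norm_pow, Complex.norm_eq_one_of_pow_eq_one hζ.pow_eq_one (NeZero.ne dd), one_pow]

lemma e_conj_mul (hζ : IsPrimitiveRoot ζ dd) (z w : ZMod dd) :
    conj (ζ ^ z.val) * ζ ^ w.val = ζ ^ (w - z).val := by
  have h1 : ζ ^ z.val * ζ ^ (w - z).val = ζ ^ w.val := by
    rw [← e_add hζ, add_sub_cancel]
  have h2 : conj (ζ ^ z.val) * (ζ ^ z.val) = 1 := by
    rw [Complex.conj_mul', e_norm hζ]; norm_num
  calc conj (ζ ^ z.val) * ζ ^ w.val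
      = conj (ζ ^ z.val) * (ζ ^ z.val) * ζ ^ (w - z).val := by rw [mul_assoc, h1]
    _ = ζ ^ (w - z).val := by rw [h2, one_mul]

lemma sum_zmod_pow_val (η : ℂ) : ∑ c : ZMod dd, η ^ c.val = ∑ k ∈ range dd, η ^ k := by
  apply Finset.sum_nbij' (i := fun (c : ZMod dd) => c.val) (j := fun (k : ℕ) => (k : ZMod dd))
  · intro a _; exact mem_range.mpr (ZMod.val_lt a)
  · intro a _; exact mem_univ _
  · intro a _; exact ZMod.natCast_rightInverse a
  · intro k hk; exact ZMod.val_cast_of_lt (mem_range.mp hk)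
  · intro a _; rfl

lemma char_sum (hζ : IsPrimitiveRoot ζ dd) (u : ZMod dd) :
    ∑ c : ZMod dd, ζ ^ (c * u).val = if u = 0 then (dd : ℂ) else 0 := by
  split_ifs with h
  · subst h; simp [ZMod.val_zero, ZMod.card]
  · have hval : ∀ c : ZMod dd, ζ ^ (c * u).val = (ζ ^ u.val) ^ c.val := by
      intro c
      rw [ZMod.val_mul, pow_val_mod hζ, ← pow_mul, mul_comm (c.val)]
    simp_rw [hval]
    rw [sum_zmod_pow_val]
    have hη1 : ζ ^ u.val ≠ 1 := by
      intro h1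
      have hdvd : dd ∣ u.val := hζ.dvd_of_pow_eq_one _ h1
      have h0 : u.val = 0 := Nat.eq_zero_of_dvd_of_lt hdvd (ZMod.val_lt u)
      exact h (by rwa [ZMod.val_eq_zero] at h0)
    rw [geom_sum_eq hη1]
    have : (ζ ^ u.val) ^ dd = 1 := by
      rw [← pow_mul, mul_comm, pow_mul, hζ.pow_eq_one, one_pow]
    rw [this]; simp

lemma char_orth (hζ : IsPrimitiveRoot ζ dd) (u u' : ZMod dd) :
    ∑ c : ZMod dd, conj (ζ ^ (c * u).val) * ζ ^ (c * u').val
      = if u = u' then (dd : ℂ) else 0 := by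
  have : ∀ c : ZMod dd, conj (ζ ^ (c * u).val) * ζ ^ (c * u').val
      = ζ ^ (c * (u' - u)).val := by
    intro c; rw [e_conj_mul hζ]; ring_nf
  simp_rw [this, char_sum hζ]
  congr 1
  simp [sub_eq_zero, eq_comm]

end chars
lemma weyl_apply (d : ℕ) [NeZero d] (ω : ℂ) (i j m m' : ZMod d) :
    Weyl d ω i j m m' = if m + j = m' then ω ^ (i * m).val else 0 := by
  unfold Weyl
  rw [Matrix.sum_apply]
  have : ∀ m₀ : ZMod d, ((ω ^ (i * m₀).val) • Matrix.single m₀ (m₀ + j) (1 : ℂ)) m m'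
      = if m₀ = m then (if m + j = m' then ω ^ (i * m).val else 0) else 0 := by
    intro m₀
    rw [Matrix.smul_apply, Matrix.single]
    by_cases h : m₀ = m
    · subst h; simp [Matrix.of_apply, and_comm]
    · simp [Matrix.of_apply, h]
  simp_rw [this, Finset.sum_ite_eq' Finset.univ m, if_pos (Finset.mem_univ m)]

section main
variable {n : ℕ} {d : Fin n → ℕ} [∀ i, NeZero (d i)] {ω : Fin n → ℂ}
  (ψ : (∀ i, ZMod (d i)) → ℂ)

lemma corr_eq (a : ∀ i, ZMod (d i) × ZMod (d i)) :
    corrN n d ω (Matrix.vecMulVec ψ (star ψ)) a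
      = ∑ x : ∀ i, ZMod (d i), (ψ x * conj (ψ (x + fun i => (a i).2)))
          * ∏ i, conj (ω i ^ ((a i).1 * x i).val) := by
  unfold corrN Matrix.trace
  simp only [Matrix.diag_apply, Matrix.mul_apply, Matrix.conjTranspose_apply, WeylT,
    Matrix.of_apply, Complex.star_def]
  apply Finset.sum_congr rfl
  intro x _
  have hW : ∀ y : ∀ i, ZMod (d i),
      (∏ i, Weyl (d i) (ω i) (a i).1 (a i).2 (x i) (y i))
        = if (x + fun i => (a i).2) = y then ∏ i, ω i ^ ((a i).1 * x i).val else 0 := by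
    intro y
    by_cases h : (x + fun i => (a i).2) = y
    · rw [if_pos h]
      apply Finset.prod_congr rfl
      intro i _
      rw [weyl_apply, if_pos]
      exact congrFun h i
    · rw [if_neg h]
      obtain ⟨i, hi⟩ : ∃ i, x i + (a i).2 ≠ y i := by
        by_contra hc
        push_neg at hc
        exact h (funext hc)
      apply Finset.prod_eq_zero (Finset.mem_univ i)
      rw [weyl_apply, if_neg hi]
    
  calc ∑ y, Matrix.vecMulVec ψ (star ψ) x y * conj (∏ i, Weyl (d i) (ω i) (a i).1 (a i).2 (x i) (y i))
      = ∑ y, (if (x + fun i => (a i).2) = y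
          then Matrix.vecMulVec ψ (star ψ) x y * conj (∏ i, ω i ^ ((a i).1 * x i).val) else 0) := by
        apply Finset.sum_congr rfl; intro y _
        rw [hW y]
        split_ifs <;> simp
    _ = Matrix.vecMulVec ψ (star ψ) x (x + fun i => (a i).2)
          * conj (∏ i, ω i ^ ((a i).1 * x i).val) := by
        rw [Finset.sum_ite_eq Finset.univ, if_pos (Finset.mem_univ _)]
    _ = _ := by
        rw [Matrix.vecMulVec_apply]
        simp [map_prod]


section main2

variable {n : ℕ} {d : Fin n → ℕ} [∀ i, NeZero (d i)]

def pairEquiv : (∀ i : Fin n, ZMod (d i) × ZMod (d i)) ≃ ((∀ i, ZMod (d i)) × (∀ i, ZMod (d i))) :=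
  ⟨fun a => (fun i => (a i).1, fun i => (a i).2), fun q i => (q.1 i, q.2 i),
   fun a => rfl, fun q => rfl⟩

lemma sum_pi_ite (p : Fin n → Prop) [DecidablePred p] (f : ∀ i, ZMod (d i) → ℂ) :
    ∑ g : ∀ i, ZMod (d i), (if ∀ i, ¬ p i → g i = 0 then ∏ i, f i (g i) else 0)
      = ∏ i, (if p i then ∑ c, f i c else f i 0) := by
  have key : ∀ i, (if p i then ∑ c, f i c else f i 0)
      = ∑ c, (if p i then f i c else if c = 0 then f i c else 0) := by
    intro i
    by_cases h : p i
    · simp [h]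
    · simp [h, Finset.sum_ite_eq']
  simp_rw [key]
  rw [Fintype.prod_sum]
  apply Finset.sum_congr rfl
  intro g _
  by_cases h : ∀ i, ¬ p i → g i = 0
  · rw [if_pos h]
    apply Finset.prod_congr rfl
    intro i _
    by_cases hp : p i
    · simp [hp]
    · simp [hp, h i hp]
  · rw [if_neg h]
    push_neg at h
    obtain ⟨i, hpi, hgi⟩ := h
    exact (Finset.prod_eq_zero (Finset.mem_univ i) (by simp [hpi, hgi])).symm

lemma prod_ite_agree (p : Fin n → Prop) [DecidablePred p] (x x' : ∀ i, ZMod (d i)) :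
    (∏ i, if p i then (if x i = x' i then (d i : ℂ) else 0) else 1)
      = if (∀ i, p i → x i = x' i) then (∏ i ∈ Finset.univ.filter p, (d i : ℂ)) else 0 := by
  by_cases h : ∀ i, p i → x i = x' i
  · rw [if_pos h, Finset.prod_filter]
    apply Finset.prod_congr rfl
    intro i _
    by_cases hp : p i <;> simp [hp, h i]
  · rw [if_neg h]
    push_neg at h
    obtain ⟨i, hpi, hne⟩ := h
    exact Finset.prod_eq_zero (Finset.mem_univ i) (by simp [hpi, hne])

end main2

lemma parseval (hω : ∀ i, IsPrimitiveRoot (ω i) (d i)) (p : Fin n → Prop) [DecidablePred p] :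
    ∑ a ∈ Finset.univ.filter (fun a : ∀ i, ZMod (d i) × ZMod (d i) => ∀ i, ¬ p i → a i = 0),
      (corrN n d ω (Matrix.vecMulVec ψ (star ψ)) a
        * conj (corrN n d ω (Matrix.vecMulVec ψ (star ψ)) a))
    = (∏ i ∈ Finset.univ.filter p, (d i : ℂ)) *
      ∑ j ∈ Finset.univ.filter (fun j : ∀ i, ZMod (d i) => ∀ i, ¬ p i → j i = 0),
        ∑ x : ∀ i, ZMod (d i),
          ∑ x' ∈ Finset.univ.filter (fun x' : ∀ i, ZMod (d i) => ∀ i, p i → x i = x' i),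
            ψ x * conj (ψ (x + j)) * (conj (ψ x') * ψ (x' + j)) := by
  have hcorr : ∀ a : ∀ i, ZMod (d i) × ZMod (d i),
      corrN n d ω (Matrix.vecMulVec ψ (star ψ)) a
        * conj (corrN n d ω (Matrix.vecMulVec ψ (star ψ)) a)
      = ∑ x : ∀ i, ZMod (d i), ∑ x' : ∀ i, ZMod (d i),
          (ψ x * conj (ψ (x + fun i => (a i).2)) * (conj (ψ x') * ψ (x' + fun i => (a i).2)))
          * ∏ i, (conj (ω i ^ ((a i).1 * x i).val) * ω i ^ ((a i).1 * x' i).val) := by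
    intro a
    rw [corr_eq, map_sum, Finset.sum_mul_sum]
    apply Finset.sum_congr rfl; intro x _
    apply Finset.sum_congr rfl; intro x' _
    simp only [_root_.map_mul, map_prod, Complex.conj_conj]
    rw [Finset.prod_mul_distrib]
    ring
  rw [Finset.sum_filter]
  simp_rw [hcorr]
  rw [← Equiv.sum_comp (pairEquiv (n := n) (d := d)).symm]
  rw [Fintype.sum_prod_type]
  simp only [pairEquiv, Equiv.coe_fn_symm_mk, Prod.mk_eq_zero, imp_and, forall_and]
  simp_rw [ite_and]
  rw [Finset.sum_comm]
  -- now : ∑ j, ∑ iv, ite (Aiv) (ite (Bj) X 0) 0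
  have hinner : ∀ j : ∀ i, ZMod (d i),
      (∑ iv : ∀ i, ZMod (d i), if (∀ i, ¬ p i → iv i = 0) then
         (if (∀ i, ¬ p i → j i = 0) then
            ∑ x : ∀ i, ZMod (d i), ∑ x' : ∀ i, ZMod (d i),
              (ψ x * conj (ψ (x + j)) * (conj (ψ x') * ψ (x' + j)))
                * ∏ i, (conj (ω i ^ (iv i * x i).val) * ω i ^ (iv i * x' i).val)
          else 0) else 0)
      = if (∀ i, ¬ p i → j i = 0) then
          ∑ x : ∀ i, ZMod (d i), ∑ x' : ∀ i, ZMod (d i),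
            (if (∀ i, p i → x i = x' i) then
              (∏ i ∈ Finset.univ.filter p, (d i : ℂ))
                * (ψ x * conj (ψ (x + j)) * (conj (ψ x') * ψ (x' + j))) else 0)
        else 0 := by
    intro j
    by_cases hB : ∀ i, ¬ p i → j i = 0
    · rw [if_pos hB]
      have hsw : ∀ iv : ∀ i, ZMod (d i),
          (if (∀ i, ¬ p i → iv i = 0) then
            (if (∀ i, ¬ p i → j i = 0) then
              ∑ x : ∀ i, ZMod (d i), ∑ x' : ∀ i, ZMod (d i),
                (ψ x * conj (ψ (x + j)) * (conj (ψ x') * ψ (x' + j)))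
                  * ∏ i, (conj (ω i ^ (iv i * x i).val) * ω i ^ (iv i * x' i).val)
             else 0) else 0)
          = ∑ x : ∀ i, ZMod (d i), ∑ x' : ∀ i, ZMod (d i),
              (ψ x * conj (ψ (x + j)) * (conj (ψ x') * ψ (x' + j)))
                * (if (∀ i, ¬ p i → iv i = 0) then
                    ∏ i, (conj (ω i ^ (iv i * x i).val) * ω i ^ (iv i * x' i).val) else 0) := by
        intro iv
        rw [if_pos hB]
        split_ifs with hA
        · rfl
        · simp
      rw [Finset.sum_congr rfl (fun iv _ => hsw iv), Finset.sum_comm]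
      apply Finset.sum_congr rfl; intro x _
      rw [Finset.sum_comm]
      apply Finset.sum_congr rfl; intro x' _
      rw [← Finset.mul_sum]
      have hps := sum_pi_ite p (fun i c => conj (ω i ^ (c * x i).val) * ω i ^ (c * x' i).val)
      rw [hps]
      have hfac : (∏ i, (if p i then
            ∑ c : ZMod (d i), conj (ω i ^ (c * x i).val) * ω i ^ (c * x' i).val
          else conj (ω i ^ ((0 : ZMod (d i)) * x i).val) * ω i ^ ((0 : ZMod (d i)) * x' i).val))
          = ∏ i, (if p i then (if x i = x' i then (d i : ℂ) else 0) else 1) := by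
        apply Finset.prod_congr rfl
        intro i _
        rw [char_orth (hω i) (x i) (x' i)]
        simp
      rw [hfac, prod_ite_agree]
      split_ifs with hag
      · ring
      · simp
    · rw [if_neg hB]
      apply Finset.sum_eq_zero
      intro iv _
      rw [if_neg hB]
      simp
  trans (∑ j : ∀ i, ZMod (d i), if (∀ i, ¬ p i → j i = 0) then
          ∑ x : ∀ i, ZMod (d i), ∑ x' : ∀ i, ZMod (d i),
            (if (∀ i, p i → x i = x' i) then
              (∏ i ∈ Finset.univ.filter p, (d i : ℂ))
                * (ψ x * conj (ψ (x + j)) * (conj (ψ x') * ψ (x' + j))) else 0)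
        else 0)
  · exact Finset.sum_congr rfl (fun j _ => hinner j)
  · rw [Finset.mul_sum, Finset.sum_filter]
    apply Finset.sum_congr rfl; intro j _
    by_cases hB : ∀ i, ¬ p i → j i = 0
    · rw [if_pos hB, if_pos hB, Finset.mul_sum]
      apply Finset.sum_congr rfl; intro x _
      rw [Finset.mul_sum, Finset.sum_filter]
    · rw [if_neg hB, if_neg hB]

lemma QJ_symm (p : Fin n → Prop) [DecidablePred p] :
    (∑ j ∈ Finset.univ.filter (fun j : ∀ i, ZMod (d i) => ∀ i, ¬ p i → j i = 0),
        ∑ x : ∀ i, ZMod (d i),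
          ∑ x' ∈ Finset.univ.filter (fun x' : ∀ i, ZMod (d i) => ∀ i, p i → x i = x' i),
            ψ x * conj (ψ (x + j)) * (conj (ψ x') * ψ (x' + j)))
    = (∑ j ∈ Finset.univ.filter (fun j : ∀ i, ZMod (d i) => ∀ i, ¬ ¬ p i → j i = 0),
        ∑ x : ∀ i, ZMod (d i),
          ∑ x' ∈ Finset.univ.filter (fun x' : ∀ i, ZMod (d i) => ∀ i, ¬ p i → x i = x' i),
            ψ x * conj (ψ (x + j)) * (conj (ψ x') * ψ (x' + j))) := by
  have flat : ∀ (q : Fin n → Prop) (_ : DecidablePred q),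
      (∑ j ∈ Finset.univ.filter (fun j : ∀ i, ZMod (d i) => ∀ i, ¬ q i → j i = 0),
        ∑ x : ∀ i, ZMod (d i),
          ∑ x' ∈ Finset.univ.filter (fun x' : ∀ i, ZMod (d i) => ∀ i, q i → x i = x' i),
            ψ x * conj (ψ (x + j)) * (conj (ψ x') * ψ (x' + j)))
      = ∑ t : (∀ i, ZMod (d i)) × (∀ i, ZMod (d i)) × (∀ i, ZMod (d i)),
          (if (∀ i, ¬ q i → t.1 i = 0) ∧ (∀ i, q i → t.2.1 i = t.2.2 i) then
            ψ t.2.1 * conj (ψ (t.2.1 + t.1)) * (conj (ψ t.2.2) * ψ (t.2.2 + t.1)) else 0) := by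
    intro q hq
    rw [Fintype.sum_prod_type]
    rw [Finset.sum_filter]
    apply Finset.sum_congr rfl; intro j _
    rw [Fintype.sum_prod_type]
    by_cases hA : ∀ i, ¬ q i → j i = 0
    · rw [if_pos hA]
      apply Finset.sum_congr rfl; intro x _
      rw [Finset.sum_filter]
      apply Finset.sum_congr rfl; intro x' _
      exact if_congr (and_iff_right hA).symm rfl rfl
    · rw [if_neg hA]
      symm
      apply Finset.sum_eq_zero; intro x _
      apply Finset.sum_eq_zero; intro x' _
      simp [hA]
  rw [flat p inferInstance, flat (fun i => ¬ p i) inferInstance]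
  apply Fintype.sum_equiv
    ⟨fun t => (t.2.2 - t.2.1, t.2.1, t.2.1 + t.1),
     fun t => (t.2.2 - t.2.1, t.2.1, t.2.1 + t.1),
     fun t => by
       obtain ⟨j, x, x'⟩ := t
       refine Prod.ext ?_ (Prod.ext ?_ ?_)
       · show x + j - x = j; abel
       · rfl
       · show x + (x' - x) = x'; abel,
     fun t => by
       obtain ⟨j, x, x'⟩ := t
       refine Prod.ext ?_ (Prod.ext ?_ ?_)
       · show x + j - x = j; abel
       · rfl
       · show x + (x' - x) = x'; abel⟩
  intro t
  obtain ⟨j, x, x'⟩ := t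
  simp only [Equiv.coe_fn_mk]
  have hcond : ((∀ i, ¬ p i → j i = 0) ∧ (∀ i, p i → x i = x' i))
      ↔ ((∀ i, ¬ ¬ p i → (x' - x) i = 0) ∧ (∀ i, ¬ p i → x i = (x + j) i)) := by
    constructor
    · rintro ⟨hA, hB⟩
      refine ⟨fun i hi => ?_, fun i hi => ?_⟩
      · have := hB i (not_not.mp hi)
        simp [Pi.sub_apply, sub_eq_zero, this]
      · simp [Pi.add_apply, hA i hi]
    · rintro ⟨hA, hB⟩
      refine ⟨fun i hi => ?_, fun i hi => ?_⟩
      · have := hB i hi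
        simpa [Pi.add_apply, left_eq_add] using this
      · have := hA i (not_not.mpr hi)
        rw [Pi.sub_apply, sub_eq_zero] at this
        exact this.symm
  rw [if_congr hcond rfl rfl]
  by_cases hc : (∀ i, ¬ ¬ p i → (x' - x) i = 0) ∧ (∀ i, ¬ p i → x i = (x + j) i)
  · rw [if_pos hc, if_pos hc]
    rw [show x + (x' - x) = x' by abel, show x + j + (x' - x) = x' + j by abel]
    ring
  · rw [if_neg hc, if_neg hc]

lemma QJ_top :
    (∑ j ∈ Finset.univ.filter
        (fun j : ∀ i, ZMod (d i) => ∀ i, ¬ (fun _ : Fin n => True) i → j i = 0),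
      ∑ x : ∀ i, ZMod (d i),
        ∑ x' ∈ Finset.univ.filter
            (fun x' : ∀ i, ZMod (d i) => ∀ i, (fun _ : Fin n => True) i → x i = x' i),
          ψ x * conj (ψ (x + j)) * (conj (ψ x') * ψ (x' + j)))
    = (↑(∑ v, ‖ψ v‖ ^ 2) : ℂ) ^ 2 := by
  have h1 : Finset.univ.filter
      (fun j : ∀ i, ZMod (d i) => ∀ i, ¬ (fun _ : Fin n => True) i → j i = 0) = Finset.univ := by
    apply Finset.filter_true_of_mem; intro j _; intro i hi; exact absurd trivial hi
  have h2 : ∀ x : ∀ i, ZMod (d i), Finset.univ.filter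
      (fun x' : ∀ i, ZMod (d i) => ∀ i, (fun _ : Fin n => True) i → x i = x' i) = {x} := by
    intro x
    ext x'
    simp only [Finset.mem_filter, Finset.mem_univ, true_and, Finset.mem_singleton]
    constructor
    · intro h; exact (funext (fun i => h i trivial)).symm
    · rintro rfl; intro i _; rfl
  simp_rw [h1, h2, Finset.sum_singleton]
  rw [Finset.sum_comm]
  have h3 : ∀ x : ∀ i, ZMod (d i),
      ∑ j : ∀ i, ZMod (d i), ψ x * conj (ψ (x + j)) * (conj (ψ x) * ψ (x + j))
      = (ψ x * conj (ψ x)) * ∑ y : ∀ i, ZMod (d i), conj (ψ y) * ψ y := by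
    intro x
    rw [Finset.mul_sum]
    exact Fintype.sum_bijective (fun j : ∀ i, ZMod (d i) => x + j)
      (Equiv.addLeft x).bijective _ _ (fun j => by ring)
  simp_rw [h3]
  rw [← Finset.sum_mul]
  have h4 : ∑ x : ∀ i, ZMod (d i), ψ x * conj (ψ x) = (↑(∑ v, ‖ψ v‖ ^ 2) : ℂ) := by
    push_cast
    apply Finset.sum_congr rfl
    intro x _
    rw [mul_comm, Complex.conj_mul']
  have h5 : ∑ y : ∀ i, ZMod (d i), conj (ψ y) * ψ y = (↑(∑ v, ‖ψ v‖ ^ 2) : ℂ) := by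
    push_cast
    apply Finset.sum_congr rfl
    intro y _
    rw [Complex.conj_mul']
  rw [h4, h5, sq]

lemma count_supp (a : ∀ i, ZMod (d i) × ZMod (d i)) :
    ((Finset.univ.filter (fun t : Fin n => ∀ i, ¬ (i = t) → a i = 0)).card : ℝ)
    = (if (Finset.univ.filter (fun i => a i ≠ 0)).card = 0 then (n : ℝ) else 0)
      + (if (Finset.univ.filter (fun i => a i ≠ 0)).card = 1 then 1 else 0) := by
  set s := Finset.univ.filter (fun i => a i ≠ 0) with hs
  by_cases h0 : s.card = 0
  · have hz : ∀ i, a i = 0 := by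
      intro i
      by_contra hne
      have : i ∈ s := by rw [hs]; simp [hne]
      rw [Finset.card_eq_zero.mp h0] at this
      exact absurd this (Finset.notMem_empty i)
    have : Finset.univ.filter (fun t : Fin n => ∀ i, ¬ (i = t) → a i = 0) = Finset.univ := by
      apply Finset.filter_true_of_mem
      intro t _ i _
      exact hz i
    rw [this, h0, if_pos rfl]
    simp
  · by_cases h1 : s.card = 1
    · obtain ⟨u, hu⟩ := Finset.card_eq_one.mp h1
      have hau : a u ≠ 0 := by
        have : u ∈ s := hu ▸ Finset.mem_singleton_self u
        rw [hs] at this; simpa using this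
      have : Finset.univ.filter (fun t : Fin n => ∀ i, ¬ (i = t) → a i = 0) = {u} := by
        ext t
        simp only [Finset.mem_filter, Finset.mem_univ, true_and, Finset.mem_singleton]
        constructor
        · intro ht
          by_contra hne
          exact hau (ht u (fun h => hne h.symm))
        · rintro rfl i hit
          by_contra hne
          have : i ∈ s := by rw [hs]; simp [hne]
          rw [hu] at this
          exact hit (Finset.mem_singleton.mp this)
      rw [this, if_neg h0, if_pos h1]
      simp
    · have h2 : 1 < s.card := by omega
      obtain ⟨u₁, hu₁, u₂, hu₂, hne⟩ := Finset.one_lt_card.mp h2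
      have : Finset.univ.filter (fun t : Fin n => ∀ i, ¬ (i = t) → a i = 0) = ∅ := by
        apply Finset.filter_false_of_mem
        intro t _ ht
        have ha1 : a u₁ ≠ 0 := by have := hu₁; rw [hs] at this; simpa using this
        have ha2 : a u₂ ≠ 0 := by have := hu₂; rw [hs] at this; simpa using this
        have e1 : u₁ = t := by by_contra hne1; exact ha1 (ht u₁ hne1)
        have e2 : u₂ = t := by by_contra hne2; exact ha2 (ht u₂ hne2)
        exact hne (e1.trans e2.symm)
      rw [this, if_neg h0, if_neg h1]
      simp

lemma count_zero (a : ∀ i, ZMod (d i) × ZMod (d i)) :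
    ((Finset.univ.filter (fun t : Fin n => ∀ i, ¬ ¬ (i = t) → a i = 0)).card : ℝ)
    = (n : ℝ) - (Finset.univ.filter (fun i => a i ≠ 0)).card := by
  have h1 : Finset.univ.filter (fun t : Fin n => ∀ i, ¬ ¬ (i = t) → a i = 0)
      = Finset.univ.filter (fun t : Fin n => ¬ (a t ≠ 0)) := by
    apply Finset.filter_congr
    intro t _
    constructor
    · intro h
      simpa using h t (not_not.mpr rfl)
    · intro h i hi
      rw [not_not.mp hi]
      simpa using h
  have h2 := Finset.card_filter_add_card_filter_not
    (s := (Finset.univ : Finset (Fin n))) (p := fun i => a i ≠ 0)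
  rw [h1]
  have hcard : (Finset.univ : Finset (Fin n)).card = n := by simp
  have hle : (Finset.univ.filter (fun i => a i ≠ 0)).card ≤ n := by
    calc _ ≤ (Finset.univ : Finset (Fin n)).card := Finset.card_filter_le _ _
    _ = n := hcard
  have : (Finset.univ.filter (fun t : Fin n => ¬ (a t ≠ 0))).card
      = n - (Finset.univ.filter (fun i => a i ≠ 0)).card := by omega
  rw [this]
  push_cast [Nat.cast_sub hle]
  ring

end main

/-- `Asum s = ∑_{i₁<⋯<iₛ} ‖T^{(i₁⋯iₛ)}‖²`, the total squared norm of all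
`s`-body correlation tensors: the sum of `|corr|²` over Weyl multi-indices with
exactly `s` nonidentity components. -/
noncomputable def Asum (n : ℕ) (d : Fin n → ℕ) [∀ i, NeZero (d i)] (ω : Fin n → ℂ)
    (ρ : Matrix (∀ i, ZMod (d i)) (∀ i, ZMod (d i)) ℂ) (s : ℕ) : ℝ :=
  ∑ a ∈ Finset.univ.filter
      (fun a : ∀ i, ZMod (d i) × ZMod (d i) =>
        (Finset.univ.filter fun i => a i ≠ 0).card = s),
    ‖corrN n d ω ρ a‖ ^ 2

/-- Lemma 3: for a pure `n`-partite state with `n > 2` and `D ≥ d²`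
(`d = max dᵢ`, `D = d₁⋯dₙ`), the full correlation tensor satisfies
`‖T^{(1⋯n)}‖² ≤ (D − (D/(n−1))∑ 1/dₛ² + 1/(n−1))
  + (1/(n−2))(n/(n−1) − (D/(n−1))∑ 1/dₛ²)`. -/
theorem full_corr_tensor_bound (n : ℕ) (hn : 2 < n) (d : Fin n → ℕ)
    [∀ i, NeZero (d i)] (ω : Fin n → ℂ) (hω : ∀ i, IsPrimitiveRoot (ω i) (d i))
    (hd : ((Finset.univ.sup d : ℕ) : ℝ) ^ 2 ≤ ∏ i, (d i : ℝ))
    (ψ : (∀ i, ZMod (d i)) → ℂ) (hψ : ∑ v, ‖ψ v‖ ^ 2 = 1)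
    (ρ : Matrix (∀ i, ZMod (d i)) (∀ i, ZMod (d i)) ℂ)
    (hρ : ρ = Matrix.vecMulVec ψ (star ψ)) :
    Asum n d ω ρ n ≤
      ((∏ i, (d i : ℝ)) -
        ((∏ i, (d i : ℝ)) / ((n : ℝ) - 1)) * (∑ s, 1 / (d s : ℝ) ^ 2) +
        1 / ((n : ℝ) - 1)) +
      (1 / ((n : ℝ) - 2)) *
        ((n : ℝ) / ((n : ℝ) - 1) -
          ((∏ i, (d i : ℝ)) / ((n : ℝ) - 1)) * (∑ s, 1 / (d s : ℝ) ^ 2)) := by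
  subst hρ
  set D : ℝ := ∏ i, (d i : ℝ) with hD
  set f : (∀ i, ZMod (d i) × ZMod (d i)) → ℝ :=
    fun a => ‖corrN n d ω (Matrix.vecMulVec ψ (star ψ)) a‖ ^ 2 with hf
  have fnonneg : ∀ a, 0 ≤ f a := fun a => sq_nonneg _
  have hAnn : ∀ s : ℕ, 0 ≤ Asum n d ω (Matrix.vecMulVec ψ (star ψ)) s :=
    fun s => Finset.sum_nonneg (fun a _ => sq_nonneg _)
  have cast_sum : ∀ s : Finset (∀ i, ZMod (d i) × ZMod (d i)),
      ((∑ a ∈ s, f a : ℝ) : ℂ)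
      = ∑ a ∈ s, corrN n d ω (Matrix.vecMulVec ψ (star ψ)) a
          * conj (corrN n d ω (Matrix.vecMulVec ψ (star ψ)) a) := by
    intro s
    rw [hf]
    push_cast
    refine Finset.sum_congr rfl fun a _ => ?_
    rw [← Complex.conj_mul']
    ring
  -- (1) total sum = D
  have hTotR : ∑ a : ∀ i, ZMod (d i) × ZMod (d i), f a = D := by
    have hTotC := parseval ψ hω (fun _ : Fin n => True)
    have hfilt_univ : (Finset.univ.filter
        (fun a : ∀ i, ZMod (d i) × ZMod (d i) => ∀ i, ¬ (fun _ : Fin n => True) i → a i = 0))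
        = Finset.univ :=
      Finset.filter_true_of_mem (fun a _ => fun i hi => absurd trivial hi)
    have hfiltp : (Finset.univ.filter (fun _ : Fin n => True)) = (Finset.univ : Finset (Fin n)) :=
      Finset.filter_true_of_mem (fun a _ => trivial)
    rw [hfilt_univ, hfiltp, QJ_top ψ, hψ] at hTotC
    rw [← cast_sum Finset.univ] at hTotC
    have : ((∑ a : ∀ i, ZMod (d i) × ZMod (d i), f a : ℝ) : ℂ) = ((D : ℝ) : ℂ) := by
      rw [hTotC, hD]; push_cast; ring
    exact_mod_cast this
  -- (2) per-party relation
  have hRel : ∀ t : Fin n,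
      D * (∑ a ∈ Finset.univ.filter
            (fun a : ∀ i, ZMod (d i) × ZMod (d i) => ∀ i, ¬ (i = t) → a i = 0), f a)
      = (d t : ℝ) ^ 2 * (∑ a ∈ Finset.univ.filter
            (fun a : ∀ i, ZMod (d i) × ZMod (d i) => ∀ i, ¬ ¬ (i = t) → a i = 0), f a) := by
    intro t
    have P1 := parseval ψ hω (fun i : Fin n => i = t)
    have P2 := parseval ψ hω (fun i : Fin n => ¬ (i = t))
    have hQ := QJ_symm ψ (fun i : Fin n => i = t)
    have hft : Finset.univ.filter (fun i : Fin n => i = t) = {t} := by ext; simp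
    have hft' : Finset.univ.filter (fun i : Fin n => ¬ (i = t)) = Finset.univ.erase t := by
      ext i; simp [Finset.mem_erase, and_comm]
    rw [hft, Finset.prod_singleton] at P1
    rw [hft'] at P2
    rw [hQ] at P1
    have hprodC : (∏ i, (d i : ℂ)) = (d t : ℂ) * ∏ i ∈ Finset.univ.erase t, (d i : ℂ) :=
      (Finset.mul_prod_erase _ _ (Finset.mem_univ t)).symm
    have hDC : ((D : ℝ) : ℂ) = ∏ i, (d i : ℂ) := by rw [hD]; push_cast; rfl
    apply Complex.ofReal_injective
    rw [Complex.ofReal_mul, Complex.ofReal_mul, cast_sum, cast_sum, P1, P2, hDC, hprodC]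
    push_cast
    ring
  -- corr at 0 equals 1
  have hsum1 : ∑ x : ∀ i, ZMod (d i), ψ x * conj (ψ x) = ((∑ v, ‖ψ v‖ ^ 2 : ℝ) : ℂ) := by
    push_cast
    exact Finset.sum_congr rfl fun x _ => by rw [← Complex.conj_mul']; ring
  have hcorr0 : corrN n d ω (Matrix.vecMulVec ψ (star ψ)) 0 = 1 := by
    rw [corr_eq]
    have hterm : ∀ x : ∀ i, ZMod (d i),
        ψ x * conj (ψ (x + fun i => ((0 : ∀ i, ZMod (d i) × ZMod (d i)) i).2))
          * (∏ i, conj (ω i ^ ((((0 : ∀ i, ZMod (d i) × ZMod (d i)) i).1 * x i)).val))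
        = ψ x * conj (ψ x) := by
      intro x
      have e1 : (x + fun i => ((0 : ∀ i, ZMod (d i) × ZMod (d i)) i).2) = x := by
        funext i; simp
      rw [e1]
      have e2 : (∏ i, conj (ω i ^ ((((0 : ∀ i, ZMod (d i) × ZMod (d i)) i).1 * x i)).val))
          = 1 := by
        apply Finset.prod_eq_one; intro i _; simp
      rw [e2, mul_one]
    rw [Finset.sum_congr rfl (fun x _ => hterm x), hsum1, hψ]
    norm_num
  have hf0 : f 0 = 1 := by
    show ‖corrN n d ω (Matrix.vecMulVec ψ (star ψ)) 0‖ ^ 2 = 1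
    rw [hcorr0]; norm_num
  have hA0 : Asum n d ω (Matrix.vecMulVec ψ (star ψ)) 0 = 1 := by
    show (∑ a ∈ Finset.univ.filter
      (fun a : ∀ i, ZMod (d i) × ZMod (d i) =>
        (Finset.univ.filter fun i => a i ≠ 0).card = 0), f a) = 1
    have hfilt : Finset.univ.filter
        (fun a : ∀ i, ZMod (d i) × ZMod (d i) =>
          (Finset.univ.filter fun i => a i ≠ 0).card = 0) = {0} := by
      ext a
      simp only [Finset.mem_filter, Finset.mem_univ, true_and, Finset.mem_singleton]
      constructor
      · intro h
        funext i
        by_contra hne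
        have hmem : i ∈ Finset.univ.filter (fun j => a j ≠ 0) :=
          Finset.mem_filter.mpr ⟨Finset.mem_univ i, hne⟩
        rw [Finset.card_eq_zero.mp h] at hmem
        exact absurd hmem (Finset.notMem_empty i)
      · rintro rfl
        rw [Finset.card_eq_zero]
        simp
    rw [hfilt, Finset.sum_singleton, hf0]
  -- partition of total sum
  have hmaps : ∀ a : ∀ i, ZMod (d i) × ZMod (d i), a ∈ (Finset.univ : Finset _) →
      (Finset.univ.filter fun i => a i ≠ 0).card ∈ Finset.range (n+1) := by
    intro a _
    rw [Finset.mem_range]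
    have h1 := Finset.card_filter_le Finset.univ (fun i => a i ≠ 0)
    have h2 : (Finset.univ : Finset (Fin n)).card = n := by simp
    omega
  have hPart : ∑ s ∈ Finset.range (n+1), Asum n d ω (Matrix.vecMulVec ψ (star ψ)) s
      = ∑ a : ∀ i, ZMod (d i) × ZMod (d i), f a :=
    Finset.sum_fiberwise_of_maps_to hmaps f
  -- weighted sums over parties
  have hRsum : (∑ t : Fin n, ∑ a ∈ Finset.univ.filter
        (fun a : ∀ i, ZMod (d i) × ZMod (d i) => ∀ i, ¬ ¬ (i = t) → a i = 0), f a)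
      = ∑ s ∈ Finset.range (n+1),
          ((n : ℝ) - s) * Asum n d ω (Matrix.vecMulVec ψ (star ψ)) s := by
    have step1 : (∑ t : Fin n, ∑ a ∈ Finset.univ.filter
          (fun a : ∀ i, ZMod (d i) × ZMod (d i) => ∀ i, ¬ ¬ (i = t) → a i = 0), f a)
        = ∑ a : ∀ i, ZMod (d i) × ZMod (d i),
            ((n : ℝ) - (Finset.univ.filter (fun i => a i ≠ 0)).card) * f a := by
      simp_rw [Finset.sum_filter]
      rw [Finset.sum_comm]
      apply Finset.sum_congr rfl
      intro a _
      rw [← count_zero a, ← Finset.sum_filter, Finset.sum_const, nsmul_eq_mul]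
    rw [step1]
    calc ∑ a : ∀ i, ZMod (d i) × ZMod (d i),
            ((n : ℝ) - (Finset.univ.filter (fun i => a i ≠ 0)).card) * f a
        = ∑ s ∈ Finset.range (n+1), ∑ a ∈ Finset.univ.filter
            (fun a : ∀ i, ZMod (d i) × ZMod (d i) =>
              (Finset.univ.filter fun i => a i ≠ 0).card = s),
            ((n : ℝ) - (Finset.univ.filter (fun i => a i ≠ 0)).card) * f a :=
          (Finset.sum_fiberwise_of_maps_to hmaps _).symm
      _ = _ := by
          apply Finset.sum_congr rfl
          intro s hs
          show _ = ((n:ℝ) - s) * ∑ a ∈ Finset.univ.filter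
            (fun a : ∀ i, ZMod (d i) × ZMod (d i) =>
              (Finset.univ.filter fun i => a i ≠ 0).card = s), f a
          rw [Finset.mul_sum]
          apply Finset.sum_congr rfl
          intro a ha
          rw [(Finset.mem_filter.mp ha).2]
  have hTsum : (∑ t : Fin n, ∑ a ∈ Finset.univ.filter
        (fun a : ∀ i, ZMod (d i) × ZMod (d i) => ∀ i, ¬ (i = t) → a i = 0), f a)
      = (n : ℝ) + Asum n d ω (Matrix.vecMulVec ψ (star ψ)) 1 := by
    have step1 : (∑ t : Fin n, ∑ a ∈ Finset.univ.filter
          (fun a : ∀ i, ZMod (d i) × ZMod (d i) => ∀ i, ¬ (i = t) → a i = 0), f a)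
        = ∑ a : ∀ i, ZMod (d i) × ZMod (d i),
            ((if (Finset.univ.filter (fun i => a i ≠ 0)).card = 0 then (n : ℝ) else 0)
              + (if (Finset.univ.filter (fun i => a i ≠ 0)).card = 1 then 1 else 0)) * f a := by
      simp_rw [Finset.sum_filter]
      rw [Finset.sum_comm]
      apply Finset.sum_congr rfl
      intro a _
      rw [← count_supp a, ← Finset.sum_filter, Finset.sum_const, nsmul_eq_mul]
    rw [step1]
    have expand : ∀ a : ∀ i, ZMod (d i) × ZMod (d i),
        ((if (Finset.univ.filter (fun i => a i ≠ 0)).card = 0 then (n : ℝ) else 0)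
          + (if (Finset.univ.filter (fun i => a i ≠ 0)).card = 1 then 1 else 0)) * f a
        = (if (Finset.univ.filter (fun i => a i ≠ 0)).card = 0 then (n : ℝ) * f a else 0)
          + (if (Finset.univ.filter (fun i => a i ≠ 0)).card = 1 then f a else 0) := by
      intro a
      split_ifs <;> ring
    rw [Finset.sum_congr rfl (fun a _ => expand a), Finset.sum_add_distrib,
      ← Finset.sum_filter, ← Finset.sum_filter]
    have e1 : (∑ a ∈ Finset.univ.filter
        (fun a : ∀ i, ZMod (d i) × ZMod (d i) =>
          (Finset.univ.filter fun i => a i ≠ 0).card = 0), (n : ℝ) * f a)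
        = (n : ℝ) * Asum n d ω (Matrix.vecMulVec ψ (star ψ)) 0 := by
      rw [← Finset.mul_sum]; rfl
    have e2 : (∑ a ∈ Finset.univ.filter
        (fun a : ∀ i, ZMod (d i) × ZMod (d i) =>
          (Finset.univ.filter fun i => a i ≠ 0).card = 1), f a)
        = Asum n d ω (Matrix.vecMulVec ψ (star ψ)) 1 := rfl
    rw [e1, e2, hA0, mul_one]
  -- lower bound for single-party sums
  have hT1ge : ∀ t : Fin n, (1:ℝ) ≤ ∑ a ∈ Finset.univ.filter
      (fun a : ∀ i, ZMod (d i) × ZMod (d i) => ∀ i, ¬ (i = t) → a i = 0), f a := by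
    intro t
    have h0mem : (0 : ∀ i, ZMod (d i) × ZMod (d i)) ∈ Finset.univ.filter
        (fun a : ∀ i, ZMod (d i) × ZMod (d i) => ∀ i, ¬ (i = t) → a i = 0) := by
      simp
    calc (1:ℝ) = f 0 := hf0.symm
      _ ≤ _ := Finset.single_le_sum (fun a _ => fnonneg a) h0mem
  -- final arithmetic
  have hn' : (2:ℝ) < (n:ℝ) := by exact_mod_cast hn
  have hq : (0:ℝ) < (n:ℝ) - 2 := by linarith
  have hp : (0:ℝ) < (n:ℝ) - 1 := by linarith
  have hdpos : ∀ t : Fin n, (0:ℝ) < (d t : ℝ)^2 := by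
    intro t
    have h1 : 0 < d t := Nat.pos_of_ne_zero (NeZero.ne (d t))
    have h2 : (0:ℝ) < (d t : ℝ) := by exact_mod_cast h1
    positivity
  have hg1 : ∀ t : Fin n, (1:ℝ) ≤ D / (d t:ℝ)^2 := by
    intro t
    rw [le_div_iff₀ (hdpos t)]
    have h1 : d t ≤ Finset.univ.sup d := Finset.le_sup (Finset.mem_univ t)
    have h2 : (d t : ℝ) ≤ ((Finset.univ.sup d : ℕ) : ℝ) := by exact_mod_cast h1
    have h0 : (0:ℝ) ≤ (d t : ℝ) := by positivity
    nlinarith [hd]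
  have hgR : ∀ t : Fin n,
      (∑ a ∈ Finset.univ.filter
        (fun a : ∀ i, ZMod (d i) × ZMod (d i) => ∀ i, ¬ ¬ (i = t) → a i = 0), f a)
      = (D / (d t:ℝ)^2) * (∑ a ∈ Finset.univ.filter
        (fun a : ∀ i, ZMod (d i) × ZMod (d i) => ∀ i, ¬ (i = t) → a i = 0), f a) := by
    intro t
    rw [div_mul_eq_mul_div, eq_div_iff (ne_of_gt (hdpos t))]
    linarith [hRel t]
  have hsumR : (∑ t : Fin n, ∑ a ∈ Finset.univ.filter
        (fun a : ∀ i, ZMod (d i) × ZMod (d i) => ∀ i, ¬ ¬ (i = t) → a i = 0), f a)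
      = D * (∑ s, 1 / (d s : ℝ) ^ 2)
        + ∑ t : Fin n, (D / (d t:ℝ)^2) * ((∑ a ∈ Finset.univ.filter
            (fun a : ∀ i, ZMod (d i) × ZMod (d i) => ∀ i, ¬ (i = t) → a i = 0), f a) - 1) := by
    rw [Finset.sum_congr rfl (fun t _ => hgR t), Finset.mul_sum, ← Finset.sum_add_distrib]
    apply Finset.sum_congr rfl
    intro t _
    ring
  have hE1 : Asum n d ω (Matrix.vecMulVec ψ (star ψ)) 1
      ≤ ∑ t : Fin n, (D / (d t:ℝ)^2) * ((∑ a ∈ Finset.univ.filter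
            (fun a : ∀ i, ZMod (d i) × ZMod (d i) => ∀ i, ¬ (i = t) → a i = 0), f a) - 1) := by
    have step : ∀ t : Fin n, ((∑ a ∈ Finset.univ.filter
          (fun a : ∀ i, ZMod (d i) × ZMod (d i) => ∀ i, ¬ (i = t) → a i = 0), f a) - 1)
        ≤ (D / (d t:ℝ)^2) * ((∑ a ∈ Finset.univ.filter
          (fun a : ∀ i, ZMod (d i) × ZMod (d i) => ∀ i, ¬ (i = t) → a i = 0), f a) - 1) := by
      intro t
      have hc : (0:ℝ) ≤ (∑ a ∈ Finset.univ.filter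
          (fun a : ∀ i, ZMod (d i) × ZMod (d i) => ∀ i, ¬ (i = t) → a i = 0), f a) - 1 := by
        linarith [hT1ge t]
      nlinarith [hg1 t]
    have heq : ∑ t : Fin n, ((∑ a ∈ Finset.univ.filter
          (fun a : ∀ i, ZMod (d i) × ZMod (d i) => ∀ i, ¬ (i = t) → a i = 0), f a) - 1)
        = Asum n d ω (Matrix.vecMulVec ψ (star ψ)) 1 := by
      rw [Finset.sum_sub_distrib, hTsum]
      simp
    calc Asum n d ω (Matrix.vecMulVec ψ (star ψ)) 1 = _ := heq.symm
      _ ≤ _ := Finset.sum_le_sum (fun t _ => step t)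
  have hsplitTot : Asum n d ω (Matrix.vecMulVec ψ (star ψ)) n
      = D - 1 - ∑ s ∈ Finset.Ico 1 n, Asum n d ω (Matrix.vecMulVec ψ (star ψ)) s := by
    have h1 : ∑ s ∈ Finset.range (n+1), Asum n d ω (Matrix.vecMulVec ψ (star ψ)) s = D :=
      hPart.trans hTotR
    rw [Finset.sum_range_succ, Finset.range_eq_Ico,
      Finset.sum_eq_sum_Ico_succ_bot (by omega : 0 < n), hA0] at h1
    linarith
  have hsplitW : (∑ t : Fin n, ∑ a ∈ Finset.univ.filter
        (fun a : ∀ i, ZMod (d i) × ZMod (d i) => ∀ i, ¬ ¬ (i = t) → a i = 0), f a)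
      = (n:ℝ) + ∑ s ∈ Finset.Ico 1 n,
          ((n:ℝ) - s) * Asum n d ω (Matrix.vecMulVec ψ (star ψ)) s := by
    rw [hRsum, Finset.sum_range_succ, Finset.range_eq_Ico,
      Finset.sum_eq_sum_Ico_succ_bot (by omega : 0 < n), hA0]
    push_cast
    ring
  have hIco1 : (∑ s ∈ Finset.Ico 1 n,
        ((n:ℝ) - s) * Asum n d ω (Matrix.vecMulVec ψ (star ψ)) s)
      ≤ ((n:ℝ) - 2) * (∑ s ∈ Finset.Ico 1 n, Asum n d ω (Matrix.vecMulVec ψ (star ψ)) s)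
        + Asum n d ω (Matrix.vecMulVec ψ (star ψ)) 1 := by
    have h12 : 1 < n := by omega
    rw [Finset.sum_eq_sum_Ico_succ_bot h12
        (fun s => ((n:ℝ) - s) * Asum n d ω (Matrix.vecMulVec ψ (star ψ)) s),
      Finset.sum_eq_sum_Ico_succ_bot h12 (Asum n d ω (Matrix.vecMulVec ψ (star ψ)))]
    have h2 : ∑ s ∈ Finset.Ico 2 n, ((n:ℝ) - s) * Asum n d ω (Matrix.vecMulVec ψ (star ψ)) s
        ≤ ((n:ℝ) - 2) * ∑ s ∈ Finset.Ico 2 n, Asum n d ω (Matrix.vecMulVec ψ (star ψ)) s := by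
      rw [Finset.mul_sum]
      apply Finset.sum_le_sum
      intro s hs
      have h3 : (2:ℕ) ≤ s := (Finset.mem_Ico.mp hs).1
      have h4 : (2:ℝ) ≤ (s:ℝ) := by exact_mod_cast h3
      nlinarith [hAnn s]
    push_cast
    linarith [h2, hAnn 1]
  -- put it together
  set B : ℝ := ∑ s ∈ Finset.Ico 1 n, Asum n d ω (Matrix.vecMulVec ψ (star ψ)) s with hB
  set W2 : ℝ := ∑ s ∈ Finset.Ico 1 n,
      ((n:ℝ) - s) * Asum n d ω (Matrix.vecMulVec ψ (star ψ)) s with hW2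
  set E : ℝ := ∑ t : Fin n, (D / (d t:ℝ)^2) * ((∑ a ∈ Finset.univ.filter
      (fun a : ∀ i, ZMod (d i) × ZMod (d i) => ∀ i, ¬ (i = t) → a i = 0), f a) - 1) with hE
  have hDS : D * (∑ s, 1 / (d s : ℝ) ^ 2) = (n:ℝ) + W2 - E := by
    linarith [hsumR, hsplitW]
  have h1 : D / ((n:ℝ) - 1) * (∑ s, 1 / (d s : ℝ) ^ 2) = ((n:ℝ) + W2 - E) / ((n:ℝ) - 1) := by
    rw [div_mul_eq_mul_div, hDS]
  rw [hsplitTot, h1]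
  have hfin : D - ((n:ℝ) + W2 - E) / ((n:ℝ) - 1) + 1 / ((n:ℝ) - 1)
      + 1 / ((n:ℝ) - 2) * ((n:ℝ) / ((n:ℝ) - 1) - ((n:ℝ) + W2 - E) / ((n:ℝ) - 1))
      = D - 1 + (E - W2) / ((n:ℝ) - 2) := by
    field_simp
    ring
  rw [hfin]
  have hdiv : -B ≤ (E - W2) / ((n:ℝ) - 2) := by
    rw [le_div_iff₀ hq]
    linarith [hIco1, hE1]
  linarith [hdiv]
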